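/- (CRAIG convergence, Lipschitz case.) Suppose at every iteration t the subset X^t and weights w^t satisfy the gradient-error bound ‖Σ_{i∈X^t} w^t_i ∇L_T^i(θ_t) − ∇L(θ_t)‖ ≤ ε (which holds in particular when the CRAIG upper bound Ê(X^t) = Σ_{i∈W} min_{j∈X^t} ‖∇L^i(θ_t) − ∇L_T^j(θ_t)‖ is at most ε). Assume ‖Σ_{i∈X^t} w^t_i ∇L_T^i(θ_t)‖ ≤ σ_T for all t, and use the constant learning rate α = D/(σ_T √T). Then min_{0 ≤ t ≤ T−1} (L(θ_t) − L(θ*)) ≤ D σ_T/√T + D ε. -/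

import Mathlib

open Finset
open scoped RealInnerProductSpace

lemma convex_grad_ineq {E : Type*} [NormedAddCommGroup E] [InnerProductSpace ℝ E]
    [CompleteSpace E] {L : E → ℝ} {gL : E → E} (hL : ∀ θ, HasGradientAt L (gL θ) θ)
    (hconv : ConvexOn ℝ Set.univ L) (x y : E) :
    L x - L y ≤ ⟪gL x, x - y⟫ := by
  set φ : ℝ → ℝ := fun s => L (x + s • (y - x)) with hφdef
  have hc : HasDerivAt (fun s : ℝ => x + s • (y - x)) (y - x) 0 := by
    have h1 : HasDerivAt (fun s : ℝ => s • (y - x)) ((1:ℝ) • (y - x)) 0 :=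
      (hasDerivAt_id (0:ℝ)).smul_const (y - x)
    simpa using h1.const_add x
  have hx0 : x + (0:ℝ) • (y - x) = x := by simp
  have hφ : HasDerivAt φ ⟪gL x, y - x⟫ 0 := by
    have hf : HasFDerivAt L (InnerProductSpace.toDual ℝ E (gL x))
        ((fun s : ℝ => x + s • (y - x)) 0) := by simp only [hx0]; exact hL x
    have := hf.comp_hasDerivAt (0:ℝ) hc
    rw [InnerProductSpace.toDual_apply_apply] at this; exact this
  have hslope : ∀ s ∈ Set.Ioc (0:ℝ) 1, slope φ 0 s ≤ L y - L x := by
    intro s hs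
    have hcv := hconv.2 (Set.mem_univ x) (Set.mem_univ y) (by linarith [hs.1, hs.2] : (0:ℝ) ≤ 1 - s)
      (le_of_lt hs.1) (by ring)
    have heq : (1 - s) • x + s • y = x + s • (y - x) := by
      rw [smul_sub, sub_smul, one_smul]; abel
    rw [heq] at hcv
    simp only [smul_eq_mul] at hcv
    have hφs : φ s - φ 0 ≤ s * (L y - L x) := by
      simp only [hφdef, hx0]
      nlinarith
    rw [slope_def_field, sub_zero, div_le_iff₀ hs.1]
    nlinarith [hφs]
  have htend : Filter.Tendsto (slope φ 0) (nhdsWithin 0 (Set.Ioi 0)) (nhds ⟪gL x, y - x⟫) :=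
    (hasDerivAt_iff_tendsto_slope.mp hφ).mono_left
      (nhdsWithin_mono _ (fun s hs => Set.mem_compl_singleton_iff.mpr (ne_of_gt hs)))
  have hle : ⟪gL x, y - x⟫ ≤ L y - L x := by
    refine le_of_tendsto htend ?_
    filter_upwards [Ioc_mem_nhdsGT_of_mem (by norm_num : (0:ℝ) ∈ Set.Ico (0:ℝ) 1)] with s hs
    exact hslope s hs
  have : ⟪gL x, x - y⟫ = -⟪gL x, y - x⟫ := by
    rw [← inner_neg_right]; congr 1; abel
  linarith [hle, this.ge]

set_option maxHeartbeats 1000000 in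
/-- CRAIG convergence, Lipschitz case: if at every iteration the gradient-matching
error of the selected weighted subset is at most `ε`, then gradient descent on the
weighted subsets converges up to an additive `D ε` term. -/
theorem craig_convergence_lipschitz
    {d : ℕ} {ι : Type*}
    (L : EuclideanSpace ℝ (Fin d) → ℝ)
    (gL : EuclideanSpace ℝ (Fin d) → EuclideanSpace ℝ (Fin d))
    (hL : ∀ θ, HasGradientAt L (gL θ) θ)
    (hLconv : ConvexOn ℝ Set.univ L)
    (θstar : EuclideanSpace ℝ (Fin d))
    (hmin : ∀ θ, L θstar ≤ L θ)
    (LT : ι → EuclideanSpace ℝ (Fin d) → ℝ)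
    (gLT : ι → EuclideanSpace ℝ (Fin d) → EuclideanSpace ℝ (Fin d))
    (hLT : ∀ i θ, HasGradientAt (LT i) (gLT i θ) θ)
    (X : ℕ → Finset ι) (w : ℕ → ι → ℝ)
    (hw0 : ∀ t, ∀ i ∈ X t, 0 ≤ w t i)
    (ε : ℝ) (hε : 0 < ε)
    (θ : ℕ → EuclideanSpace ℝ (Fin d))
    (hE : ∀ t, ‖(∑ i ∈ X t, w t i • gLT i (θ t)) - gL (θ t)‖ ≤ ε)
    (D σT : ℝ) (T : ℕ) (hT : 1 ≤ T)
    (hD : ∀ t, ‖θ t - θstar‖ ≤ D)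
    (hσ : ∀ t, ‖∑ i ∈ X t, w t i • gLT i (θ t)‖ ≤ σT)
    (α : ℝ) (hα : α = D / (σT * Real.sqrt T))
    (hupd : ∀ t, θ (t + 1) = θ t - α • ∑ i ∈ X t, w t i • gLT i (θ t)) :
    (Finset.range T).inf' (Finset.nonempty_range_iff.mpr (by omega))
        (fun t => L (θ t) - L θstar)
      ≤ D * σT / Real.sqrt T + D * ε := by
  set g : ℕ → EuclideanSpace ℝ (Fin d) := fun t => ∑ i ∈ X t, w t i • gLT i (θ t) with hg
  have hDnn : 0 ≤ D := le_trans (norm_nonneg _) (hD 0)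
  have hσnn : 0 ≤ σT := le_trans (norm_nonneg _) (hσ 0)
  have hTpos : (0:ℝ) < T := by exact_mod_cast Nat.lt_of_lt_of_le Nat.zero_lt_one hT
  set rT : ℝ := Real.sqrt T with hrTdef
  have hspos : 0 < rT := Real.sqrt_pos.mpr hTpos
  have hss : rT * rT = T := Real.mul_self_sqrt hTpos.le
  have h0mem : 0 ∈ Finset.range T := Finset.mem_range.mpr (by omega)
  -- step 1: convexity + gradient error
  have step1 : ∀ t, L (θ t) - L θstar ≤ ⟪g t, θ t - θstar⟫ + D * ε := by
    intro t
    have h1 := convex_grad_ineq hL hLconv (θ t) θstar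
    have h2 : ⟪gL (θ t), θ t - θstar⟫
        = ⟪g t, θ t - θstar⟫ + ⟪gL (θ t) - g t, θ t - θstar⟫ := by
      rw [← inner_add_left]; congr 1; abel
    have h3 : ⟪gL (θ t) - g t, θ t - θstar⟫ ≤ D * ε := by
      calc ⟪gL (θ t) - g t, θ t - θstar⟫
          ≤ ‖gL (θ t) - g t‖ * ‖θ t - θstar‖ := real_inner_le_norm _ _
        _ ≤ ε * D := by
            apply mul_le_mul _ (hD t) (norm_nonneg _) hε.le
            rw [norm_sub_rev]; exact hE t
        _ = D * ε := mul_comm _ _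
    linarith [h1, h2.le, h2.ge, h3]
  -- degenerate cases
  by_cases hσ0 : σT = 0
  · have hg0 : g 0 = 0 := by
      have := hσ 0; rw [hσ0] at this
      exact norm_le_zero_iff.mp this
    have h0 : L (θ 0) - L θstar ≤ D * ε := by
      have := step1 0; rw [hg0] at this; simpa using this
    refine le_trans (Finset.inf'_le _ h0mem) ?_
    rw [hσ0]
    have : D * 0 / Real.sqrt T = 0 := by ring
    rw [this]; linarith
  by_cases hD0 : D = 0
  · have hθ0 : θ 0 = θstar := by
      have := hD 0; rw [hD0] at this
      exact sub_eq_zero.mp (norm_le_zero_iff.mp this)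
    refine le_trans (Finset.inf'_le _ h0mem) ?_
    rw [hθ0, hD0]; simp
  -- main case
  have hDpos : 0 < D := lt_of_le_of_ne hDnn (Ne.symm hD0)
  have hσpos : 0 < σT := lt_of_le_of_ne hσnn (Ne.symm hσ0)
  have hαpos : 0 < α := by
    rw [hα]; positivity
  -- step 2: descent identity and per-step bound
  have step2 : ∀ t, α * ⟪g t, θ t - θstar⟫
      ≤ (‖θ t - θstar‖^2 - ‖θ (t+1) - θstar‖^2)/2 + α^2 * σT^2 / 2 := by
    intro t
    have hup : θ (t+1) - θstar = (θ t - θstar) - α • g t := by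
      rw [hupd t]; abel
    have hid : ‖θ (t+1) - θstar‖^2
        = ‖θ t - θstar‖^2 - 2 * (α * ⟪g t, θ t - θstar⟫) + α^2 * ‖g t‖^2 := by
      rw [hup, @norm_sub_sq_real, real_inner_smul_right, norm_smul]
      rw [real_inner_comm]
      rw [mul_pow, Real.norm_eq_abs, sq_abs]
    have hgσ : ‖g t‖^2 ≤ σT^2 := by
      have := hσ t
      nlinarith [norm_nonneg (g t)]
    nlinarith [hid, sq_nonneg α]
  -- sum the per-step bounds and telescope
  have htel : ∑ t ∈ Finset.range T,
      ((‖θ t - θstar‖^2 - ‖θ (t+1) - θstar‖^2)/2 + α^2 * σT^2 / 2)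
      = (‖θ 0 - θstar‖^2 - ‖θ T - θstar‖^2)/2 + T * (α^2 * σT^2 / 2) := by
    rw [Finset.sum_add_distrib, Finset.sum_const, Finset.card_range, ← Finset.sum_div,
      Finset.sum_range_sub' (fun t => ‖θ t - θstar‖^2), nsmul_eq_mul]
  have hsum1 : α * ∑ t ∈ Finset.range T, ⟪g t, θ t - θstar⟫
      ≤ D^2/2 + T * (α^2 * σT^2 / 2) := by
    rw [Finset.mul_sum]
    refine le_trans (Finset.sum_le_sum (fun t _ => step2 t)) ?_
    rw [htel]
    have h0 : ‖θ 0 - θstar‖^2 ≤ D^2 := by nlinarith [hD 0, norm_nonneg (θ 0 - θstar)]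
    nlinarith [sq_nonneg ‖θ T - θstar‖, norm_nonneg (θ T - θstar)]
  have hval : D^2/2 + T * (α^2 * σT^2 / 2) = α * (D * σT * rT) := by
    have h1 : α * (σT * rT) = D := by
      rw [hα]; field_simp
    have h2 : (T:ℝ) * (α^2 * σT^2) = D^2 := by rw [← hss, ← h1]; ring
    have h3 : α * (D * σT * rT) = D^2 := by rw [← h1]; ring
    linear_combination h2/2 - h3
  have hsum2 : ∑ t ∈ Finset.range T, ⟪g t, θ t - θstar⟫ ≤ D * σT * rT := by
    rw [hval] at hsum1
    exact le_of_mul_le_mul_left hsum1 hαpos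
  have hsumL : ∑ t ∈ Finset.range T, (L (θ t) - L θstar)
      ≤ D * σT * rT + T * (D * ε) := by
    calc ∑ t ∈ Finset.range T, (L (θ t) - L θstar)
        ≤ ∑ t ∈ Finset.range T, (⟪g t, θ t - θstar⟫ + D * ε) :=
          Finset.sum_le_sum (fun t _ => step1 t)
      _ = (∑ t ∈ Finset.range T, ⟪g t, θ t - θstar⟫) + T * (D * ε) := by
          rw [Finset.sum_add_distrib, Finset.sum_const, Finset.card_range, nsmul_eq_mul]
      _ ≤ D * σT * rT + T * (D * ε) := by linarith [hsum2]
  -- min ≤ average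
  set I := (Finset.range T).inf' (Finset.nonempty_range_iff.mpr (by omega))
      (fun t => L (θ t) - L θstar) with hI
  have hinf : (T:ℝ) * I ≤ ∑ t ∈ Finset.range T, (L (θ t) - L θstar) := by
    have := Finset.card_nsmul_le_sum (Finset.range T) (fun t => L (θ t) - L θstar) I
      (fun t ht => Finset.inf'_le _ ht)
    rwa [Finset.card_range, nsmul_eq_mul] at this
  have hTs : (T:ℝ) * (D * σT / rT) = D * σT * rT := by
    rw [← hss]
    calc rT * rT * (D * σT / rT) = D * σT * (rT * (rT / rT)) := by ring
      _ = D * σT * rT := by rw [div_self hspos.ne', mul_one]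
  have : (T:ℝ) * I ≤ (T:ℝ) * (D * σT / rT + D * ε) := by
    rw [mul_add, hTs]
    linarith [hinf, hsumL]
  exact le_of_mul_le_mul_left this hTpos
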